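/- If X is the union of d ≥ 2 distinct planes H1, …, Hd in CP^3 all containing a common twistor line L, then the twistor discriminant locus of X is exactly the single point π(L) ∈ S^4. -/

import Mathlib

/-- Complex projective 3-space. -/
noncomputable abbrev CP3 := Projectivization ℂ (Fin 4 → ℂ)
/-- Left quaternionic projective line. -/
noncomputable abbrev HP1 := Projectivization (Quaternion ℝ) (Fin 2 → Quaternion ℝ)

/-- The conjugate-linear map `j(z0,z1,z2,z3) = (-conj z1, conj z0, -conj z3, conj z2)`. -/
noncomputable def jMap (v : Fin 4 → ℂ) : Fin 4 → ℂ :=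
  ![-(starRingEnd ℂ (v 1)), starRingEnd ℂ (v 0), -(starRingEnd ℂ (v 3)), starRingEnd ℂ (v 2)]

lemma jMap_ne_zero {v : Fin 4 → ℂ} (hv : v ≠ 0) : jMap v ≠ 0 := by
  intro h
  apply hv
  funext i
  have h0 := congrFun h 0
  have h1 := congrFun h 1
  have h2 := congrFun h 2
  have h3 := congrFun h 3
  simp only [jMap, Matrix.cons_val_zero, Matrix.cons_val_one, Matrix.head_cons,
    Matrix.cons_val_two, Matrix.cons_val_three, Matrix.tail_cons, Pi.zero_apply,
    neg_eq_zero, map_eq_zero] at h0 h1 h2 h3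
  fin_cases i <;> simp [h0, h1, h2, h3]

/-- The anti-holomorphic involution induced by `jMap` on `CP3`. -/
noncomputable def jProj (p : CP3) : CP3 :=
  Projectivization.mk ℂ (jMap p.rep) (jMap_ne_zero p.rep_nonzero)

/-- The complex number `a` viewed as a quaternion. -/
noncomputable def toQ (a : ℂ) : Quaternion ℝ := ⟨a.re, a.im, 0, 0⟩
/-- The quaternionic imaginary unit `j`. -/
noncomputable def qj : Quaternion ℝ := ⟨0, 0, 1, 0⟩

lemma cpair_eq (a b : ℂ) : toQ a + toQ b * qj = (⟨a.re, a.im, b.re, b.im⟩ : Quaternion ℝ) := by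
  ext <;> simp [Quaternion.re_mul, Quaternion.imI_mul, Quaternion.imJ_mul,
    Quaternion.imK_mul] <;> simp [toQ, qj]

lemma cpair_eq_zero {a b : ℂ} (h : toQ a + toQ b * qj = 0) : a = 0 ∧ b = 0 := by
  rw [cpair_eq] at h
  have h' := Quaternion.ext_iff.mp h
  simp at h'
  constructor <;> [exact Complex.ext h'.1 h'.2.1; exact Complex.ext h'.2.2.1 h'.2.2.2]

/-- `(z0,z1,z2,z3) ↦ (z0 + z1 j, z2 + z3 j)`. -/
noncomputable def piRaw (z : Fin 4 → ℂ) : Fin 2 → Quaternion ℝ :=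
  ![toQ (z 0) + toQ (z 1) * qj, toQ (z 2) + toQ (z 3) * qj]

lemma piRaw_ne_zero {z : Fin 4 → ℂ} (hz : z ≠ 0) : piRaw z ≠ 0 := by
  intro h
  apply hz
  have h0 := cpair_eq_zero (congrFun h 0)
  have h1 := cpair_eq_zero (congrFun h 1)
  funext i
  fin_cases i <;> simp [h0.1, h0.2, h1.1, h1.2]

/-- The twistor fibration `π : CP3 → HP1`. -/
noncomputable def piProj (p : CP3) : HP1 :=
  Projectivization.mk (Quaternion ℝ) (piRaw p.rep) (piRaw_ne_zero p.rep_nonzero)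

/-- A projective line in `CP3`: the projectivization of a 2-dimensional subspace of `ℂ⁴`. -/
def IsProjLine (L : Set CP3) : Prop :=
  ∃ W : Submodule ℂ (Fin 4 → ℂ), Module.finrank ℂ ↥W = 2 ∧ L = {p | p.submodule ≤ W}

/-- A twistor line: a projective line invariant under the involution `j`. -/
def IsTwistorLine (L : Set CP3) : Prop := IsProjLine L ∧ jProj '' L = L

/-- The projective zero locus in `CP3` of a homogeneous polynomial. -/
def Vproj (f : MvPolynomial (Fin 4) ℂ) : Set CP3 := {p | MvPolynomial.eval p.rep f = 0}

/-- The twistor discriminant locus of a degree `d` surface `X ⊂ CP3`. -/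
noncomputable def twistorDisc (d : ℕ) (X : Set CP3) : Set HP1 :=
  {q | (piProj ⁻¹' {q} ∩ X).ncard ≠ d}


/-! ### Auxiliary machinery -/

open Projectivization

lemma toQ_add (a b : ℂ) : toQ (a + b) = toQ a + toQ b := by
  ext <;> simp <;> simp [toQ]

lemma toQ_mul (a b : ℂ) : toQ (a * b) = toQ a * toQ b := by
  ext <;> simp [Quaternion.re_mul, Quaternion.imI_mul, Quaternion.imJ_mul,
    Quaternion.imK_mul] <;> simp [toQ, Complex.mul_re, Complex.mul_im] <;> ring

noncomputable def qc1 (a : Quaternion ℝ) : ℂ := ⟨a.re, a.imI⟩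
noncomputable def qc2 (a : Quaternion ℝ) : ℂ := ⟨a.imJ, a.imK⟩

lemma qdecomp (a : Quaternion ℝ) : toQ (qc1 a) + toQ (qc2 a) * qj = a := by
  rw [cpair_eq]; rfl

/-- The inverse of `piRaw`. -/
noncomputable def invRaw (w : Fin 2 → Quaternion ℝ) : Fin 4 → ℂ :=
  ![qc1 (w 0), qc2 (w 0), qc1 (w 1), qc2 (w 1)]

lemma piRaw_invRaw (w : Fin 2 → Quaternion ℝ) : piRaw (invRaw w) = w := by
  funext i
  fin_cases i <;> simp [piRaw, invRaw, qdecomp]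

lemma invRaw_piRaw (z : Fin 4 → ℂ) : invRaw (piRaw z) = z := by
  funext i
  have h0 := cpair_eq (z 0) (z 1)
  have h1 := cpair_eq (z 2) (z 3)
  fin_cases i <;>
    simp [piRaw, invRaw, h0, h1, qc1, qc2] <;> rfl

lemma piRaw_injective : Function.Injective piRaw :=
  Function.LeftInverse.injective invRaw_piRaw

lemma piRaw_add (z w : Fin 4 → ℂ) : piRaw (z + w) = piRaw z + piRaw w := by
  funext i
  fin_cases i <;> simp [piRaw, toQ_add] <;> noncomm_ring

lemma piRaw_smul (c : ℂ) (z : Fin 4 → ℂ) : piRaw (c • z) = toQ c • piRaw z := by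
  funext i
  fin_cases i <;> simp [piRaw, toQ_mul, smul_eq_mul] <;> noncomm_ring

lemma toQ_zero : toQ 0 = 0 := by simpa using toQ_add 0 0

lemma piRaw_zero : piRaw (0 : Fin 4 → ℂ) = 0 := by
  funext i
  fin_cases i <;> simp [piRaw, toQ_zero]

/-- First basis vector of the (complex) plane lying over `q`. -/
noncomputable def fv1 (q : HP1) : Fin 4 → ℂ := invRaw q.rep
/-- Second basis vector of the (complex) plane lying over `q`. -/
noncomputable def fv2 (q : HP1) : Fin 4 → ℂ := invRaw (qj • q.rep)

lemma piRaw_fv1 (q : HP1) : piRaw (fv1 q) = q.rep := piRaw_invRaw _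
lemma piRaw_fv2 (q : HP1) : piRaw (fv2 q) = qj • q.rep := piRaw_invRaw _

lemma piRaw_combo (q : HP1) (c1 c2 : ℂ) :
    piRaw (c1 • fv1 q + c2 • fv2 q) = (toQ c1 + toQ c2 * qj) • q.rep := by
  rw [piRaw_add, piRaw_smul, piRaw_smul, piRaw_fv1, piRaw_fv2, smul_smul, add_smul]

lemma smul_rep_eq_zero {q : HP1} {a : Quaternion ℝ} (h : a • q.rep = 0) : a = 0 := by
  by_contra ha
  exact q.rep_nonzero (by simpa [ha] using congrArg (fun w => a⁻¹ • w) h)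

/-- Independence of `fv1 q`, `fv2 q`. -/
lemma indep2 (q : HP1) {c1 c2 : ℂ} (h : c1 • fv1 q + c2 • fv2 q = 0) :
    c1 = 0 ∧ c2 = 0 := by
  have h' : (toQ c1 + toQ c2 * qj) • q.rep = 0 := by
    rw [← piRaw_combo, h, piRaw_zero]
  exact cpair_eq_zero (smul_rep_eq_zero h')

lemma fv1_ne_zero (q : HP1) : fv1 q ≠ 0 := by
  intro h
  have := (indep2 q (c1 := 1) (c2 := 0) (by simp [h])).1
  simp at this

lemma combo_ne_zero (q : HP1) {c1 c2 : ℂ} (h : ¬(c1 = 0 ∧ c2 = 0)) :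
    c1 • fv1 q + c2 • fv2 q ≠ 0 := fun hz => h (indep2 q hz)

/-- Characterization of the fibers of the twistor fibration. -/
lemma fiber_mem (q : HP1) (p : CP3) :
    piProj p = q ↔ ∃ c1 c2 : ℂ, p.rep = c1 • fv1 q + c2 • fv2 q := by
  constructor
  · intro h
    have h2 : Projectivization.mk (Quaternion ℝ) (piRaw p.rep) (piRaw_ne_zero p.rep_nonzero)
        = Projectivization.mk (Quaternion ℝ) q.rep q.rep_nonzero := by
      rw [Projectivization.mk_rep]; exact h
    obtain ⟨a, ha⟩ := (Projectivization.mk_eq_mk_iff _ _ _ _ _).1 h2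
    refine ⟨qc1 (a : Quaternion ℝ), qc2 (a : Quaternion ℝ), piRaw_injective ?_⟩
    rw [piRaw_combo, qdecomp]
    exact ha.symm
  · rintro ⟨c1, c2, hrep⟩
    have hp : piRaw p.rep = (toQ c1 + toQ c2 * qj) • q.rep := by
      rw [hrep, piRaw_combo]
    have ha : (toQ c1 + toQ c2 * qj) ≠ 0 := by
      intro h0
      exact piRaw_ne_zero p.rep_nonzero (by rw [hp, h0, zero_smul])
    have : piProj p = Projectivization.mk (Quaternion ℝ) q.rep q.rep_nonzero := by
      unfold piProj
      rw [Projectivization.mk_eq_mk_iff']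
      exact ⟨_, hp.symm⟩
    rw [this, Projectivization.mk_rep]

/-- The four vectors coming from two distinct fibers are independent. -/
lemma indep4 {q q' : HP1} (hqq : q' ≠ q) {c1 c2 d1 d2 : ℂ}
    (h : c1 • fv1 q' + c2 • fv2 q' + (d1 • fv1 q + d2 • fv2 q) = 0) :
    c1 = 0 ∧ c2 = 0 ∧ d1 = 0 ∧ d2 = 0 := by
  set a := toQ c1 + toQ c2 * qj with ha
  set b := toQ d1 + toQ d2 * qj with hb
  have h' : a • q'.rep + b • q.rep = 0 := by
    rw [← piRaw_combo, ← piRaw_combo, ← piRaw_add, h, piRaw_zero]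
  have haz : a = 0 := by
    by_contra haz
    have h2 : q'.rep = (a⁻¹ * -b) • q.rep := by
      have : a • q'.rep = (-b) • q.rep := by
        rw [neg_smul]; exact eq_neg_of_add_eq_zero_left h'
      calc q'.rep = a⁻¹ • a • q'.rep := by rw [smul_smul, inv_mul_cancel₀ haz, one_smul]
        _ = (a⁻¹ * -b) • q.rep := by rw [this, smul_smul]
    have hc : (a⁻¹ * -b) ≠ 0 := by
      intro h0
      exact q'.rep_nonzero (by rw [h2, h0, zero_smul])
    apply hqq
    have : Projectivization.mk (Quaternion ℝ) q'.rep q'.rep_nonzero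
        = Projectivization.mk (Quaternion ℝ) q.rep q.rep_nonzero := by
      rw [Projectivization.mk_eq_mk_iff']
      exact ⟨_, h2.symm⟩
    rw [← Projectivization.mk_rep q', ← Projectivization.mk_rep q]
    exact this
  obtain ⟨hc1, hc2⟩ := cpair_eq_zero haz
  have hbz : b = 0 := smul_rep_eq_zero (by simpa [haz] using h')
  obtain ⟨hd1, hd2⟩ := cpair_eq_zero hbz
  exact ⟨hc1, hc2, hd1, hd2⟩

/-- The linear functional associated to a degree-one polynomial. -/
noncomputable def linOf (f : MvPolynomial (Fin 4) ℂ) : (Fin 4 → ℂ) →ₗ[ℂ] ℂ :=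
  ∑ j, f.coeff (Finsupp.single j 1) • (LinearMap.proj j : (Fin 4 → ℂ) →ₗ[ℂ] ℂ)

lemma linOf_apply (f : MvPolynomial (Fin 4) ℂ) (v : Fin 4 → ℂ) :
    linOf f v = ∑ j, f.coeff (Finsupp.single j 1) * v j := by
  simp [linOf]

lemma degree_one_single {d : Fin 4 →₀ ℕ} (hd : Finsupp.degree d = 1) :
    ∃ j, d = Finsupp.single j 1 := by
  have h1 : Multiset.card (Finsupp.toMultiset d) = 1 := by
    rw [Finsupp.card_toMultiset]; exact hd
  obtain ⟨j, hj⟩ := Multiset.card_eq_one.mp h1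
  refine ⟨j, ?_⟩
  rw [Finsupp.toMultiset_eq_iff] at hj
  rw [hj]
  classical
  ext k
  simp [Multiset.toFinsupp_apply, Finsupp.single_apply, Multiset.count_singleton, eq_comm]

lemma eval_linOf {f : MvPolynomial (Fin 4) ℂ} (hf : f.IsHomogeneous 1) (v : Fin 4 → ℂ) :
    MvPolynomial.eval v f = linOf f v := by
  classical
  rw [MvPolynomial.eval_eq, linOf_apply]
  have hsub : f.support ⊆ Finset.image (fun j => Finsupp.single j 1) Finset.univ := by
    intro d hd
    have hdeg : Finsupp.degree d = 1 := by
      by_contra hne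
      exact (MvPolynomial.mem_support_iff.mp hd) (hf.coeff_eq_zero hne)
    obtain ⟨j, rfl⟩ := degree_one_single hdeg
    exact Finset.mem_image_of_mem _ (Finset.mem_univ j)
  rw [Finset.sum_subset hsub (fun d _ hd => by
    rw [MvPolynomial.notMem_support_iff.mp hd, zero_mul])]
  rw [Finset.sum_image (fun x _ y _ h => Finsupp.single_left_injective one_ne_zero h)]
  refine Finset.sum_congr rfl fun j _ => ?_
  rw [Finsupp.support_single_ne_zero _ one_ne_zero]
  simp

lemma poly_eq_zero {f : MvPolynomial (Fin 4) ℂ} (hf : f.IsHomogeneous 1)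
    (h : linOf f = 0) : f = 0 := by
  ext d
  rw [MvPolynomial.coeff_zero]
  by_cases hdeg : Finsupp.degree d = 1
  · obtain ⟨j, rfl⟩ := degree_one_single hdeg
    have : linOf f (Pi.single j 1) = 0 := by rw [h]; rfl
    rw [linOf_apply] at this
    simpa [Pi.single_apply, Finset.sum_ite_eq'] using this
  · exact hf.coeff_eq_zero hdeg

/-- A linear form vanishing on the fiber over `q` vanishes on `fv1 q`, `fv2 q`. -/
lemma vanish_on_fiber {f : MvPolynomial (Fin 4) ℂ} (hf : f.IsHomogeneous 1) {q : HP1}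
    (h : piProj ⁻¹' {q} ⊆ Vproj f) :
    linOf f (fv1 q) = 0 ∧ linOf f (fv2 q) = 0 := by
  have key : ∀ c1 c2 : ℂ, ¬(c1 = 0 ∧ c2 = 0) → linOf f (c1 • fv1 q + c2 • fv2 q) = 0 := by
    intro c1 c2 hc
    set z := c1 • fv1 q + c2 • fv2 q with hz
    have hzne : z ≠ 0 := combo_ne_zero q hc
    set p : CP3 := Projectivization.mk ℂ z hzne with hp
    obtain ⟨a, ha⟩ := Projectivization.exists_smul_eq_mk_rep ℂ z hzne
    have hfib : piProj p = q := by
      rw [fiber_mem]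
      refine ⟨(a : ℂ) * c1, (a : ℂ) * c2, ?_⟩
      rw [← ha, hz, Units.smul_def, smul_add, smul_smul, smul_smul]
    have hpV : p ∈ Vproj f := h (by simpa using hfib)
    have : MvPolynomial.eval p.rep f = 0 := hpV
    rw [eval_linOf hf, ← ha, Units.smul_def, map_smul, smul_eq_mul] at this
    rcases mul_eq_zero.mp this with h' | h'
    · exact absurd h' a.ne_zero
    · rwa [hz] at h'
  constructor
  · simpa using key 1 0 (by simp)
  · simpa using key 0 1 (by simp)

/-- if `X` is the union of `d ≥ 2` distinct planes all containing the common
twistor line `π⁻¹(q)`, then the twistor discriminant locus of `X` is exactly `{q}`. -/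
theorem stmt_13 :
    ∀ d : ℕ, 2 ≤ d → ∀ (ℓ : Fin d → MvPolynomial (Fin 4) ℂ) (q : HP1),
      (∀ i, (ℓ i).IsHomogeneous 1 ∧ ℓ i ≠ 0) →
      (Function.Injective fun i => Vproj (ℓ i)) →
      (∀ i, piProj ⁻¹' {q} ⊆ Vproj (ℓ i)) →
      twistorDisc d (Vproj (∏ i, ℓ i)) = {q} := by
  intro d hd ℓ q hℓ hinj hL
  have hd0 : 0 < d := by omega
  have hw : ∀ i, linOf (ℓ i) (fv1 q) = 0 ∧ linOf (ℓ i) (fv2 q) = 0 :=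
    fun i => vanish_on_fiber (hℓ i).1 (hL i)
  have hX : ∀ p : CP3, p ∈ Vproj (∏ i, ℓ i) ↔ ∃ i, linOf (ℓ i) p.rep = 0 := by
    intro p
    constructor
    · intro hp
      have hzero : (∏ i, MvPolynomial.eval p.rep (ℓ i)) = 0 := by
        rw [← map_prod]; exact hp
      obtain ⟨i, _, hi⟩ := Finset.prod_eq_zero_iff.mp hzero
      exact ⟨i, by rw [← eval_linOf (hℓ i).1]; exact hi⟩
    · rintro ⟨i, hi⟩
      show MvPolynomial.eval p.rep (∏ i, ℓ i) = 0
      rw [map_prod]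
      exact Finset.prod_eq_zero (Finset.mem_univ i)
        (by rw [eval_linOf (hℓ i).1]; exact hi)
  ext q'
  simp only [twistorDisc, Set.mem_setOf_eq, Set.mem_singleton_iff]
  by_cases hq : q' = q
  · subst hq
    refine iff_of_true ?_ rfl
    have hsub : piProj ⁻¹' {q'} ⊆ Vproj (∏ i, ℓ i) := by
      intro p hp
      rw [Set.mem_preimage, Set.mem_singleton_iff] at hp
      rw [hX]
      refine ⟨⟨0, hd0⟩, ?_⟩
      have := hL ⟨0, hd0⟩ (by simpa using hp)
      rw [← eval_linOf (hℓ _).1]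
      exact this
    have hone : ∀ t : ℂ, fv1 q' + t • fv2 q' ≠ 0 := by
      intro t h0
      have h1 : (1 : ℂ) • fv1 q' + t • fv2 q' = 0 := by rw [one_smul]; exact h0
      simpa using (indep2 q' h1).1
    have hmem : ∀ t : ℂ, piProj (Projectivization.mk ℂ (fv1 q' + t • fv2 q') (hone t)) = q' := by
      intro t
      obtain ⟨a, ha⟩ := Projectivization.exists_smul_eq_mk_rep ℂ _ (hone t)
      rw [fiber_mem]
      refine ⟨(a : ℂ), (a : ℂ) * t, ?_⟩
      rw [← ha, Units.smul_def]
      module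
    have hfinj : Function.Injective (fun t : ℂ =>
        Projectivization.mk ℂ (fv1 q' + t • fv2 q') (hone t)) := by
      intro s t h
      rw [Projectivization.mk_eq_mk_iff'] at h
      obtain ⟨a, ha⟩ := h
      have key : (a - 1) • fv1 q' + (a * t - s) • fv2 q' =
          a • (fv1 q' + t • fv2 q') - (fv1 q' + s • fv2 q') := by module
      rw [ha, sub_self] at key
      obtain ⟨h1, h2⟩ := indep2 q' key
      have ha1 : a = 1 := by linear_combination h1
      have : t = s := by linear_combination h2 - t * h1
      exact this.symm
    have hinf : (piProj ⁻¹' {q'} ∩ Vproj (∏ i, ℓ i)).Infinite := by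
      apply Set.infinite_of_injective_forall_mem hfinj
      intro t
      exact ⟨by simpa using hmem t, hsub (by simpa using hmem t)⟩
    rw [hinf.ncard]
    omega
  · refine iff_of_false ?_ hq
    rw [not_ne_iff]
    have hcard : Fintype.card (Fin 4) = Module.finrank ℂ (Fin 4 → ℂ) := by
      simp
    have hli : LinearIndependent ℂ ![fv1 q', fv2 q', fv1 q, fv2 q] := by
      rw [Fintype.linearIndependent_iff]
      intro g hg
      rw [Fin.sum_univ_four] at hg
      have hg' : g 0 • fv1 q' + g 1 • fv2 q' + (g 2 • fv1 q + g 3 • fv2 q) = 0 := by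
        simpa [Matrix.cons_val_zero, Matrix.cons_val_one, add_assoc] using hg
      obtain ⟨h1, h2, h3, h4⟩ := indep4 hq hg'
      intro i; fin_cases i <;> assumption
    have hb : ⇑(basisOfLinearIndependentOfCardEqFinrank hli hcard)
        = ![fv1 q', fv2 q', fv1 q, fv2 q] :=
      coe_basisOfLinearIndependentOfCardEqFinrank hli hcard
    have hAB : ∀ i, ¬(linOf (ℓ i) (fv1 q') = 0 ∧ linOf (ℓ i) (fv2 q') = 0) := by
      rintro i ⟨hA, hB⟩
      apply (hℓ i).2
      apply poly_eq_zero (hℓ i).1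
      apply (basisOfLinearIndependentOfCardEqFinrank hli hcard).ext
      intro j
      rw [hb]
      fin_cases j <;> simp [hA, hB, (hw i).1, (hw i).2]
    have hg0 : ∀ i : Fin d,
        linOf (ℓ i) (fv2 q') • fv1 q' - linOf (ℓ i) (fv1 q') • fv2 q' ≠ 0 := by
      intro i h0
      apply hAB i
      have h1 : linOf (ℓ i) (fv2 q') • fv1 q' + (-(linOf (ℓ i) (fv1 q'))) • fv2 q' = 0 := by
        rw [neg_smul, ← sub_eq_add_neg]; exact h0
      obtain ⟨e1, e2⟩ := indep2 q' h1
      exact ⟨neg_eq_zero.mp e2, e1⟩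
    set g : Fin d → CP3 := fun i =>
      Projectivization.mk ℂ _ (hg0 i) with hgdef
    have hgfib : ∀ i, piProj (g i) = q' := by
      intro i
      obtain ⟨a, ha⟩ := Projectivization.exists_smul_eq_mk_rep ℂ _ (hg0 i)
      rw [fiber_mem]
      refine ⟨(a : ℂ) * linOf (ℓ i) (fv2 q'), -((a : ℂ) * linOf (ℓ i) (fv1 q')), ?_⟩
      show (g i).rep = _
      rw [hgdef, ← ha, Units.smul_def]
      module
    have hgX : ∀ i, g i ∈ Vproj (∏ i, ℓ i) := by
      intro i
      rw [hX]
      refine ⟨i, ?_⟩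
      obtain ⟨a, ha⟩ := Projectivization.exists_smul_eq_mk_rep ℂ _ (hg0 i)
      show linOf (ℓ i) (g i).rep = 0
      rw [hgdef, ← ha, Units.smul_def, map_smul, map_sub, map_smul, map_smul]
      simp only [smul_eq_mul]
      ring
    have hginj : Function.Injective g := by
      intro i j hij
      by_contra hne
      rw [hgdef, Projectivization.mk_eq_mk_iff'] at hij
      obtain ⟨t, ht⟩ := hij
      have key : (t * linOf (ℓ j) (fv2 q') - linOf (ℓ i) (fv2 q')) • fv1 q' +
          (linOf (ℓ i) (fv1 q') - t * linOf (ℓ j) (fv1 q')) • fv2 q' =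
          t • (linOf (ℓ j) (fv2 q') • fv1 q' - linOf (ℓ j) (fv1 q') • fv2 q') -
          (linOf (ℓ i) (fv2 q') • fv1 q' - linOf (ℓ i) (fv1 q') • fv2 q') := by module
      rw [ht, sub_self] at key
      obtain ⟨h1, h2⟩ := indep2 q' key
      have hBi : linOf (ℓ i) (fv2 q') = t * linOf (ℓ j) (fv2 q') := by linear_combination -h1
      have hAi : linOf (ℓ i) (fv1 q') = t * linOf (ℓ j) (fv1 q') := by linear_combination h2
      have ht0 : t ≠ 0 := by
        rintro rfl
        exact hAB i ⟨by rw [hAi]; ring, by rw [hBi]; ring⟩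
      have hmaps : linOf (ℓ i) = t • linOf (ℓ j) := by
        apply (basisOfLinearIndependentOfCardEqFinrank hli hcard).ext
        intro k
        rw [hb]
        fin_cases k <;>
          simp [hAi, hBi, (hw i).1, (hw i).2, (hw j).1, (hw j).2]
      apply hne
      apply hinj
      show Vproj (ℓ i) = Vproj (ℓ j)
      ext p
      show MvPolynomial.eval p.rep (ℓ i) = 0 ↔ MvPolynomial.eval p.rep (ℓ j) = 0
      rw [eval_linOf (hℓ i).1, eval_linOf (hℓ j).1, hmaps]
      simp [ht0]
    have hS : piProj ⁻¹' {q'} ∩ Vproj (∏ i, ℓ i) = Set.range g := by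
      ext p
      constructor
      · rintro ⟨hp1, hp2⟩
        rw [Set.mem_preimage, Set.mem_singleton_iff] at hp1
        obtain ⟨c1, c2, hrep⟩ := (fiber_mem q' p).mp hp1
        obtain ⟨i, hi⟩ := (hX p).mp hp2
        rw [hrep, map_add, map_smul, map_smul, smul_eq_mul, smul_eq_mul] at hi
        have hc : ¬(c1 = 0 ∧ c2 = 0) := by
          rintro ⟨rfl, rfl⟩
          apply p.rep_nonzero
          rw [hrep]; simp
        have hexists : ∃ t : ℂ,
            t • (linOf (ℓ i) (fv2 q') • fv1 q' - linOf (ℓ i) (fv1 q') • fv2 q') = p.rep := by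
          by_cases hB : linOf (ℓ i) (fv2 q') = 0
          · have hA : linOf (ℓ i) (fv1 q') ≠ 0 := fun h => hAB i ⟨h, hB⟩
            have hc1 : c1 = 0 := by
              have h0 : c1 * linOf (ℓ i) (fv1 q') = 0 := by
                rw [hB] at hi; simpa using hi
              exact (mul_eq_zero.mp h0).resolve_right hA
            refine ⟨-(c2 / linOf (ℓ i) (fv1 q')), ?_⟩
            have e2 : -(c2 / linOf (ℓ i) (fv1 q')) * -(linOf (ℓ i) (fv1 q')) = c2 := by
              field_simp
            calc (-(c2 / linOf (ℓ i) (fv1 q'))) •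
                  (linOf (ℓ i) (fv2 q') • fv1 q' - linOf (ℓ i) (fv1 q') • fv2 q')
                = (-(c2 / linOf (ℓ i) (fv1 q')) * linOf (ℓ i) (fv2 q')) • fv1 q' +
                  (-(c2 / linOf (ℓ i) (fv1 q')) * -(linOf (ℓ i) (fv1 q'))) • fv2 q' := by
                  module
              _ = c1 • fv1 q' + c2 • fv2 q' := by rw [e2, hB, hc1]; ring_nf
              _ = p.rep := hrep.symm
          · refine ⟨c1 / linOf (ℓ i) (fv2 q'), ?_⟩
            have e1 : c1 / linOf (ℓ i) (fv2 q') * linOf (ℓ i) (fv2 q') = c1 := by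
              field_simp
            have e2 : c1 / linOf (ℓ i) (fv2 q') * -(linOf (ℓ i) (fv1 q')) = c2 := by
              field_simp
              linear_combination -hi
            calc (c1 / linOf (ℓ i) (fv2 q')) •
                  (linOf (ℓ i) (fv2 q') • fv1 q' - linOf (ℓ i) (fv1 q') • fv2 q')
                = (c1 / linOf (ℓ i) (fv2 q') * linOf (ℓ i) (fv2 q')) • fv1 q' +
                  (c1 / linOf (ℓ i) (fv2 q') * -(linOf (ℓ i) (fv1 q'))) • fv2 q' := by
                  module
              _ = c1 • fv1 q' + c2 • fv2 q' := by rw [e1, e2]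
              _ = p.rep := hrep.symm
        refine ⟨i, ?_⟩
        have hmk : Projectivization.mk ℂ p.rep p.rep_nonzero = Projectivization.mk ℂ _ (hg0 i) := by
          rw [Projectivization.mk_eq_mk_iff']
          exact hexists
        rw [hgdef]
        rw [← Projectivization.mk_rep p]
        exact hmk.symm
      · rintro ⟨i, rfl⟩
        exact ⟨by simpa using hgfib i, hgX i⟩
    rw [hS, ← Set.image_univ, Set.ncard_image_of_injective _ hginj, Set.ncard_univ,
      Nat.card_eq_fintype_card, Fintype.card_fin]
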